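/- Let s > 0 and N ≥ 1. For every probability density ρ on T_N^d and every discrete vector field V : T_N^d × {1,…,d} → ℝ, the action does not increase under the discrete heat flow: A_N(H^N_s ρ, H^N_s V) ≤ A_N(ρ, V), where H^N_s acts on V componentwise by (H^N_s V)(a,i) = N^{−d} Σ_{b∈T_N^d} h^N_s(a−b) V(b,i). -/

import Mathlib

open MeasureTheory Filter Set Function
open scoped ENNReal NNReal BigOperators

noncomputable section

namespace GHConv

/-! ### The discrete torus `T_N^d = (ℤ/Nℤ)^d` -/

/-- The discrete torus. -/
abbrev TN (d N : ℕ) := Fin d → ZMod N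

/-- The `i`-th unit vector in the discrete torus. -/
def unitVec (d N : ℕ) (i : Fin d) : TN d N := fun j => if j = i then 1 else 0

/-- A probability density on the discrete torus: a nonnegative function summing to `N^d`. -/
def IsDensity (d N : ℕ) [NeZero N] (ρ : TN d N → ℝ) : Prop :=
  (∀ a, 0 ≤ ρ a) ∧ ∑ a : TN d N, ρ a = (N : ℝ) ^ d

/-- The logarithmic mean `θ(s,t) = ∫₀¹ s^(1-p) t^p dp`, set to `0` if `s = 0` or `t = 0`. -/
def logMean (s t : ℝ) : ℝ :=
  if 0 < s ∧ 0 < t then ∫ p in (0:ℝ)..1, s ^ (1 - p) * t ^ p else 0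

/-- The harmonic mean `θ̃(s,t) = 2st/(s+t)`, set to `0` if `s = 0` or `t = 0`. -/
def harmMean (s t : ℝ) : ℝ :=
  if 0 < s ∧ 0 < t then 2 * s * t / (s + t) else 0

/-- The action `A_N(ρ,V)`, valued in `ℝ≥0∞` (so that an edge of zero density carrying a
nonzero flux has infinite action, while `0/0 = 0`). -/
def actionN (d N : ℕ) [NeZero N] (ρ : TN d N → ℝ) (V : TN d N → Fin d → ℝ) : ℝ≥0∞ :=
  ENNReal.ofReal (1 / (4 * (d:ℝ)^2 * (N:ℝ)^(d+2))) *
    ∑ a : TN d N, ∑ i : Fin d,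
      ENNReal.ofReal ((V a i)^2) / ENNReal.ofReal (logMean (ρ a) (ρ (a + unitVec d N i)))

/-- The action built from the harmonic mean instead of the logarithmic mean. -/
def actionHarmN (d N : ℕ) [NeZero N] (ρ : TN d N → ℝ) (V : TN d N → Fin d → ℝ) : ℝ≥0∞ :=
  ENNReal.ofReal (1 / (4 * (d:ℝ)^2 * (N:ℝ)^(d+2))) *
    ∑ a : TN d N, ∑ i : Fin d,
      ENNReal.ofReal ((V a i)^2) / ENNReal.ofReal (harmMean (ρ a) (ρ (a + unitVec d N i)))

/-- Solutions of the discrete continuity equation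
`dρ_t/dt (a) + (1/(2d)) ∑ᵢ (V_t(a,i) - V_t(a-eᵢ,i)) = 0` on `(0,1)`, distributionally. -/
structure DiscCESol (d N : ℕ) [NeZero N]
    (ρ : ℝ → TN d N → ℝ) (V : ℝ → TN d N → Fin d → ℝ) : Prop where
  density : ∀ t ∈ Icc (0:ℝ) 1, IsDensity d N (ρ t)
  cont : ∀ a, ContinuousOn (fun t => ρ t a) (Icc (0:ℝ) 1)
  intV : ∀ a i, IntervalIntegrable (fun t => V t a i) volume 0 1
  weak : ∀ a, ∀ φ : ℝ → ℝ, ContDiff ℝ (⊤ : ℕ∞) φ → Function.support φ ⊆ Ioo (0:ℝ) 1 →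
    ∫ t in (0:ℝ)..1, ρ t a * deriv φ t =
      ∫ t in (0:ℝ)..1, φ t *
        ((1 / (2 * (d:ℝ))) * ∑ i : Fin d, (V t a i - V t (a - unitVec d N i) i))

/-- The squared discrete transportation distance `W_N²` (logarithmic mean). -/
def WNsq (d N : ℕ) [NeZero N] (ρ0 ρ1 : TN d N → ℝ) : ℝ≥0∞ :=
  ⨅ p : {p : (ℝ → TN d N → ℝ) × (ℝ → TN d N → Fin d → ℝ) //
      DiscCESol d N p.1 p.2 ∧ p.1 0 = ρ0 ∧ p.1 1 = ρ1},
    ∫⁻ t in Icc (0:ℝ) 1, actionN d N ((p : _ ).1.1 t) ((p : _).1.2 t)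

/-- The discrete transportation distance `W_N`. -/
def WN (d N : ℕ) [NeZero N] (ρ0 ρ1 : TN d N → ℝ) : ℝ≥0∞ :=
  (WNsq d N ρ0 ρ1) ^ (1/2 : ℝ)

/-- The squared discrete transportation distance built from the harmonic mean. -/
def WtildeNsq (d N : ℕ) [NeZero N] (ρ0 ρ1 : TN d N → ℝ) : ℝ≥0∞ :=
  ⨅ p : {p : (ℝ → TN d N → ℝ) × (ℝ → TN d N → Fin d → ℝ) //
      DiscCESol d N p.1 p.2 ∧ p.1 0 = ρ0 ∧ p.1 1 = ρ1},
    ∫⁻ t in Icc (0:ℝ) 1, actionHarmN d N ((p : _).1.1 t) ((p : _).1.2 t)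

/-- The discrete transportation distance built from the harmonic mean. -/
def WtildeN (d N : ℕ) [NeZero N] (ρ0 ρ1 : TN d N → ℝ) : ℝ≥0∞ :=
  (WtildeNsq d N ρ0 ρ1) ^ (1/2 : ℝ)

/-- The rescaled metric `d_N(a,b) = (1/N) √(∑ᵢ |aᵢ-bᵢ|²)` on the discrete torus, where
`|aᵢ-bᵢ|` is the distance in `ℤ/Nℤ`. -/
def dN (d N : ℕ) [NeZero N] (a b : TN d N) : ℝ :=
  (1 / (N:ℝ)) * Real.sqrt (∑ i : Fin d, (((a i - b i).valMinAbs : ℤ) : ℝ)^2)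

/-- The regularity class `D_δ(T_N^d)`: densities bounded below by `δ` with Lipschitz
constant (w.r.t. `d_N`) at most `δ⁻¹`. -/
def InDreg (d N : ℕ) [NeZero N] (δ : ℝ) (ρ : TN d N → ℝ) : Prop :=
  IsDensity d N ρ ∧ (∀ a, δ ≤ ρ a) ∧ ∀ a b, |ρ a - ρ b| ≤ δ⁻¹ * dN d N a b

/-- The squared restricted distance `W_{N,δ}²`, where the interpolating densities are
required to stay in `D_δ(T_N^d)`. -/
def WNdeltaSq (d N : ℕ) [NeZero N] (δ : ℝ) (ρ0 ρ1 : TN d N → ℝ) : ℝ≥0∞ :=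
  ⨅ p : {p : (ℝ → TN d N → ℝ) × (ℝ → TN d N → Fin d → ℝ) //
      DiscCESol d N p.1 p.2 ∧ p.1 0 = ρ0 ∧ p.1 1 = ρ1 ∧
        ∀ t ∈ Icc (0:ℝ) 1, InDreg d N δ (p.1 t)},
    ∫⁻ t in Icc (0:ℝ) 1, actionN d N ((p : _).1.1 t) ((p : _).1.2 t)

/-- The restricted distance `W_{N,δ}`. -/
def WNdelta (d N : ℕ) [NeZero N] (δ : ℝ) (ρ0 ρ1 : TN d N → ℝ) : ℝ≥0∞ :=
  (WNdeltaSq d N δ ρ0 ρ1) ^ (1/2 : ℝ)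

/-- Couplings between two discrete densities (w.r.t. the uniform measure `π_N(a) = N^{-d}`). -/
def IsDiscCoupling (d N : ℕ) [NeZero N] (ρ0 ρ1 : TN d N → ℝ)
    (γ : TN d N × TN d N → ℝ) : Prop :=
  (∀ p, 0 ≤ γ p) ∧ (∀ a, ∑ b : TN d N, γ (a, b) = ρ0 a / (N:ℝ)^d) ∧
    (∀ b, ∑ a : TN d N, γ (a, b) = ρ1 b / (N:ℝ)^d)

/-- The squared `2`-Wasserstein distance on the discrete torus w.r.t. `d_N`. -/
def W2Nsq (d N : ℕ) [NeZero N] (ρ0 ρ1 : TN d N → ℝ) : ℝ≥0∞ :=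
  ⨅ γ : {γ : TN d N × TN d N → ℝ // IsDiscCoupling d N ρ0 ρ1 γ},
    ENNReal.ofReal (∑ p : TN d N × TN d N, dN d N p.1 p.2 ^ 2 * (γ : _ → ℝ) p)

/-- The `2`-Wasserstein distance on the discrete torus w.r.t. `d_N`. -/
def W2N (d N : ℕ) [NeZero N] (ρ0 ρ1 : TN d N → ℝ) : ℝ≥0∞ :=
  (W2Nsq d N ρ0 ρ1) ^ (1/2 : ℝ)

/-! ### Discrete Dirichlet form, Laplacian and heat flow -/

/-- Normalised squared `L²` norm on the discrete torus. -/
def l2NormSq (d N : ℕ) [NeZero N] (f : TN d N → ℝ) : ℝ :=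
  (1 / (N:ℝ)^d) * ∑ a : TN d N, (f a)^2

/-- The Dirichlet form `E_N(f,g)`. -/
def dirichletN (d N : ℕ) [NeZero N] (f g : TN d N → ℝ) : ℝ :=
  ((N:ℝ)^2 / (N:ℝ)^d) * ∑ a : TN d N, ∑ i : Fin d,
    (f (a + unitVec d N i) - f a) * (g (a + unitVec d N i) - g a)

/-- The discrete Laplacian `Δ_N`. -/
def lapN (d N : ℕ) (f : TN d N → ℝ) (a : TN d N) : ℝ :=
  (N:ℝ)^2 * ∑ i : Fin d, (f (a + unitVec d N i) - 2 * f a + f (a - unitVec d N i))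

/-- The matrix of the discrete Laplacian `Δ_N`. -/
def lapMat (d N : ℕ) [NeZero N] : Matrix (TN d N) (TN d N) ℝ := fun a b =>
  (N:ℝ)^2 * ∑ i : Fin d,
    ((if b = a + unitVec d N i then (1:ℝ) else 0) + (if b = a - unitVec d N i then 1 else 0)
      - 2 * (if b = a then 1 else 0))

/-- The discrete heat semigroup `H^N_s = exp (s Δ_N)` acting on functions. -/
def heatN (d N : ℕ) [NeZero N] (s : ℝ) (f : TN d N → ℝ) (a : TN d N) : ℝ :=
  ∑ b : TN d N, NormedSpace.exp (s • lapMat d N) a b * f b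

/-- The discrete heat kernel `h^N_s = H^N_s (N^d 𝟙_{0})`. -/
def heatKerN (d N : ℕ) [NeZero N] (s : ℝ) (c : TN d N) : ℝ :=
  heatN d N s (fun b => if b = 0 then (N:ℝ)^d else 0) c

/-- The discrete heat semigroup acting componentwise on discrete vector fields. -/
def heatVecN (d N : ℕ) [NeZero N] (s : ℝ) (V : TN d N → Fin d → ℝ)
    (a : TN d N) (i : Fin d) : ℝ :=
  (1 / (N:ℝ)^d) * ∑ b : TN d N, heatKerN d N s (a - b) * V b i

/-! ### The continuous torus `T^d = (ℝ/ℤ)^d` -/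

instance : Fact ((0:ℝ) < 1) := ⟨one_pos⟩

/-- The continuous torus, as a product of circles `ℝ/ℤ`. Its Haar (Lebesgue) probability
measure is `volume`. -/
abbrev Td (d : ℕ) := Fin d → AddCircle (1 : ℝ)

/-- The canonical representative in `[0,1)` of a point of `ℝ/ℤ`. -/
def torusRep (x : AddCircle (1:ℝ)) : ℝ := (AddCircle.equivIco 1 0 x : ℝ)

/-- The canonical lift of a point of the torus to `ℝ^d` (coordinates in `[0,1)`). -/
def torusLift (d : ℕ) (x : Td d) : Fin d → ℝ := fun i => torusRep (x i)

/-- The quotient (Euclidean) distance on the torus: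
`d(x,y) = √(∑ᵢ dist(xᵢ,yᵢ)²)` where `dist` is the quotient distance on `ℝ/ℤ`. -/
def torusDist (d : ℕ) (x y : Td d) : ℝ :=
  Real.sqrt (∑ i : Fin d, (dist (x i) (y i))^2)

/-- Couplings between two measures. -/
def IsCoupling {X : Type*} [MeasurableSpace X] (μ ν : Measure X) (γ : Measure (X × X)) : Prop :=
  IsProbabilityMeasure γ ∧ γ.map Prod.fst = μ ∧ γ.map Prod.snd = ν

/-- The squared `2`-Wasserstein distance on the torus. -/
def W2sq (d : ℕ) (μ ν : Measure (Td d)) : ℝ≥0∞ :=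
  ⨅ γ : {γ : Measure (Td d × Td d) // IsCoupling μ ν γ},
    ∫⁻ p, ENNReal.ofReal (torusDist d p.1 p.2 ^ 2) ∂(γ : Measure (Td d × Td d))

/-- The `2`-Wasserstein distance on the torus. -/
def W2 (d : ℕ) (μ ν : Measure (Td d)) : ℝ≥0∞ := (W2sq d μ ν) ^ (1/2 : ℝ)

/-! ### Heat kernel and heat semigroup on the torus -/

/-- The heat kernel on the torus, via periodization of the Gauss kernel. -/
def heatKer (d : ℕ) (s : ℝ) (x : Td d) : ℝ :=
  ∑' k : Fin d → ℤ, (4 * Real.pi * s) ^ (-(d:ℝ)/2) *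
    Real.exp (-(∑ i : Fin d, (torusRep (x i) + (k i : ℝ))^2) / (4*s))

/-- The density of `H_s μ` with respect to the Lebesgue probability measure. -/
def heatDensity (d : ℕ) (s : ℝ) (μ : Measure (Td d)) (x : Td d) : ℝ :=
  ∫ y, heatKer d s (x - y) ∂μ

/-- The measure `H_s μ`. -/
def heatMeasure (d : ℕ) (s : ℝ) (μ : Measure (Td d)) : Measure (Td d) :=
  volume.withDensity fun x => ENNReal.ofReal (heatDensity d s μ x)

/-- The heat semigroup acting on functions. -/
def heatFun (d : ℕ) (s : ℝ) (f : Td d → ℝ) (x : Td d) : ℝ :=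
  ∫ y, heatKer d s (x - y) * f y

/-! ### Continuity equations on the torus -/

/-- Test functions for the continuity equation on `(0,1) × T^d`: smooth functions on
`ℝ × ℝ^d`, `ℤ^d`-periodic in space, with support in time contained in `(0,1)`. -/
structure IsTestFun (d : ℕ) (φ : ℝ × (Fin d → ℝ) → ℝ) : Prop where
  smooth : ContDiff ℝ (⊤ : ℕ∞) φ
  periodic : ∀ t (x : Fin d → ℝ) (k : Fin d → ℤ), φ (t, x + fun i => (k i : ℝ)) = φ (t, x)
  suppt : ∀ x, Function.support (fun t => φ (t, x)) ⊆ Ioo (0:ℝ) 1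

/-- Solutions `(μ_t, v_t)` of `∂_t μ_t + ∇·(v_t μ_t) = 0` on the torus, distributionally,
with `μ_t` probability measures and `∫₀¹ ∫ |v_t| dμ_t dt < ∞`. -/
structure MeasureCESol (d : ℕ) (μ : ℝ → Measure (Td d)) (v : ℝ → Td d → Fin d → ℝ) : Prop where
  prob : ∀ t ∈ Icc (0:ℝ) 1, IsProbabilityMeasure (μ t)
  weakCont : ∀ f : Td d → ℝ, Continuous f → ContinuousOn (fun t => ∫ x, f x ∂(μ t)) (Icc (0:ℝ) 1)
  meas : Measurable (Function.uncurry v)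
  intV : ∫⁻ t in Icc (0:ℝ) 1,
      (∫⁻ x, ENNReal.ofReal (Real.sqrt (∑ i : Fin d, (v t x i)^2)) ∂(μ t)) < ⊤
  weak : ∀ φ : ℝ × (Fin d → ℝ) → ℝ, IsTestFun d φ →
    ∫ t in (0:ℝ)..1, ∫ x, (fderiv ℝ φ (t, torusLift d x) (1, 0)
        + ∑ i : Fin d, fderiv ℝ φ (t, torusLift d x) (0, Pi.single i 1) * v t x i) ∂(μ t) = 0

/-- The kinetic energy `∫₀¹ ∫ |v_t|² dμ_t dt`. -/
def energy (d : ℕ) (μ : ℝ → Measure (Td d)) (v : ℝ → Td d → Fin d → ℝ) : ℝ≥0∞ :=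
  ∫⁻ t in Icc (0:ℝ) 1, ∫⁻ x, ENNReal.ofReal (∑ i : Fin d, (v t x i)^2) ∂(μ t)

/-- Solutions `(ρ_t, V_t)` of the continuity equation `∂_t ρ_t + ∇·V_t = 0` on the torus
(densities and momentum fields in `L¹([0,1] × T^d)`, `t ↦ ρ_t π` weakly continuous). -/
structure DensityCESol (d : ℕ) (ρ : ℝ → Td d → ℝ) (V : ℝ → Td d → Fin d → ℝ) : Prop where
  intRho : Integrable (fun p : ℝ × Td d => ρ p.1 p.2)
    ((volume.restrict (Icc (0:ℝ) 1)).prod volume)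
  intV : Integrable (fun p : ℝ × Td d => Real.sqrt (∑ i : Fin d, (V p.1 p.2 i)^2))
    ((volume.restrict (Icc (0:ℝ) 1)).prod volume)
  weakCont : ∀ f : Td d → ℝ, Continuous f →
    ContinuousOn (fun t => ∫ x, f x * ρ t x) (Icc (0:ℝ) 1)
  weak : ∀ φ : ℝ × (Fin d → ℝ) → ℝ, IsTestFun d φ →
    ∫ t in (0:ℝ)..1, ∫ x, (fderiv ℝ φ (t, torusLift d x) (1, 0) * ρ t x
        + ∑ i : Fin d, fderiv ℝ φ (t, torusLift d x) (0, Pi.single i 1) * V t x i) = 0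

/-! ### Projections and extensions between the two tori -/

/-- The half-open cube `Q_a^N ⊆ T^d` associated to `a ∈ T_N^d`. -/
def cubeSet (d N : ℕ) (a : TN d N) : Set (Td d) :=
  {x | ∀ i, torusRep (x i) ∈ Ico (((a i).val : ℝ) / N) ((((a i).val : ℝ) + 1) / N)}

/-- Projection of a (continuous) density: `P_N(ρπ)(a) = N^d ∫_{Q_a^N} ρ dπ`. -/
def PNdens (d N : ℕ) (ρ : Td d → ℝ) (a : TN d N) : ℝ :=
  (N:ℝ)^d * ∫ x in cubeSet d N a, ρ x

/-- Projection of a measure: `P_N(μ)(a) = N^d μ(Q_a^N)`. -/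
def PNmeas (d N : ℕ) (μ : Measure (Td d)) (a : TN d N) : ℝ :=
  (N:ℝ)^d * (μ (cubeSet d N a)).toReal

/-- Parameterization of the facet `R_{a,i+}^N` of the cube `Q_a^N`
(the coordinate `y i` is a dummy variable). -/
def facetPoint (d N : ℕ) (a : TN d N) (i : Fin d) (y : Fin d → ℝ) : Td d :=
  fun j => (((if j = i then ((a i).val : ℝ) + 1 else ((a j).val : ℝ) + y j) / N : ℝ) :
    AddCircle (1:ℝ))

/-- The unit cube `[0,1)^d ⊆ ℝ^d` of parameters. -/
def unitCube (d : ℕ) : Set (Fin d → ℝ) := Set.univ.pi fun _ => Ico (0:ℝ) 1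

/-- Projection of a momentum vector field: `P_N(V)(a,i) = 2dN^d ∫_{R_{a,i+}^N} Vᵢ dH^{d-1}`;
here the surface integral over the flat facet `R_{a,i+}^N` (of side length `1/N`) is written
as `N^{-(d-1)}` times an integral over the parameterizing unit cube. -/
def PNvec (d N : ℕ) (V : Td d → Fin d → ℝ) (a : TN d N) (i : Fin d) : ℝ :=
  2 * (d:ℝ) * (N:ℝ)^d * ((1 / (N:ℝ)^(d-1)) * ∫ y in unitCube d, V (facetPoint d N a i y) i)

/-- The cell of the discrete torus containing a point `x ∈ T^d`. -/
def discretize (d N : ℕ) (x : Td d) : TN d N :=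
  fun i => ((⌊(N:ℝ) * torusRep (x i)⌋ : ℤ) : ZMod N)

/-- Extension of a discrete density to a piecewise constant density on the torus. -/
def QNdens (d N : ℕ) (ρN : TN d N → ℝ) (x : Td d) : ℝ := ρN (discretize d N x)

/-- The probability measure `Q_N(ρ^N) π` on the torus. -/
def QNmeas (d N : ℕ) (ρN : TN d N → ℝ) : Measure (Td d) :=
  volume.withDensity fun x => ENNReal.ofReal (QNdens d N ρN x)

/-- Extension of a discrete momentum vector field to the torus, by linear interpolation. -/
def QNvec (d N : ℕ) (VN : TN d N → Fin d → ℝ) (x : Td d) (i : Fin d) : ℝ :=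
  (1 / (2 * (d:ℝ) * N)) *
    ((1 - (N:ℝ) * torusRep (x i) + ((discretize d N x i).val : ℝ)) *
        VN (discretize d N x - unitVec d N i) i
      + ((N:ℝ) * torusRep (x i) - ((discretize d N x i).val : ℝ)) * VN (discretize d N x) i)


section AuxLemmas
open scoped Nat
lemma integrand_cont {s t : ℝ} (hs : 0 < s) (ht : 0 < t) :
    Continuous fun p : ℝ => s ^ (1 - p) * t ^ p := by
  have h : (fun p : ℝ => s ^ (1 - p) * t ^ p)
      = fun p : ℝ => Real.exp (Real.log s * (1 - p)) * Real.exp (Real.log t * p) := by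
    funext p
    rw [Real.rpow_def_of_pos hs, Real.rpow_def_of_pos ht]
  rw [h]; fun_prop

lemma logMean_nonneg (s t : ℝ) : 0 ≤ logMean s t := by
  unfold logMean
  split
  · next h =>
    apply intervalIntegral.integral_nonneg (by norm_num)
    intro u _
    exact mul_nonneg (Real.rpow_nonneg h.1.le _) (Real.rpow_nonneg h.2.le _)
  · exact le_refl 0

lemma logMean_pos {s t : ℝ} (hs : 0 < s) (ht : 0 < t) : 0 < logMean s t := by
  unfold logMean
  rw [if_pos ⟨hs, ht⟩]
  apply intervalIntegral.intervalIntegral_pos_of_pos_on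
    ((integrand_cont hs ht).intervalIntegrable 0 1)
  · intro x _
    exact mul_pos (Real.rpow_pos_of_pos hs _) (Real.rpow_pos_of_pos ht _)
  · norm_num

lemma logMean_eq_zero {s t : ℝ} (h : ¬ (0 < s ∧ 0 < t)) : logMean s t = 0 := if_neg h

lemma logMean_smul {w : ℝ} (hw : 0 ≤ w) (s t : ℝ) :
    logMean (w * s) (w * t) = w * logMean s t := by
  rcases eq_or_lt_of_le hw with hw0 | hw0
  · simp [← hw0, logMean]
  by_cases hst : 0 < s ∧ 0 < t
  · unfold logMean
    rw [if_pos ⟨mul_pos hw0 hst.1, mul_pos hw0 hst.2⟩, if_pos hst,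
      ← intervalIntegral.integral_const_mul]
    apply intervalIntegral.integral_congr
    intro p _
    have : (w * s) ^ (1 - p) * (w * t) ^ p
        = (w ^ (1-p) * w ^ p) * (s ^ (1-p) * t ^ p) := by
      rw [Real.mul_rpow hw hst.1.le, Real.mul_rpow hw hst.2.le]; ring
    beta_reduce
    rw [this, ← Real.rpow_add hw0, sub_add_cancel, Real.rpow_one]
  · rw [logMean_eq_zero hst, logMean_eq_zero, mul_zero]
    intro ⟨h1, h2⟩
    exact hst ⟨by nlinarith, by nlinarith⟩

open Finset in
lemma amgm_sum {β : Type*} (F : Finset β) (f g : β → ℝ) {S T p : ℝ}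
    (hf : ∀ b ∈ F, 0 < f b) (hg : ∀ b ∈ F, 0 < g b)
    (hfS : ∑ b ∈ F, f b ≤ S) (hgT : ∑ b ∈ F, g b ≤ T)
    (hS : 0 < S) (hT : 0 < T) (hp0 : 0 ≤ p) (hp1 : p ≤ 1) :
    ∑ b ∈ F, f b ^ (1 - p) * g b ^ p ≤ S ^ (1 - p) * T ^ p := by
  have hSp : 0 < S ^ (1 - p) * T ^ p :=
    mul_pos (Real.rpow_pos_of_pos hS _) (Real.rpow_pos_of_pos hT _)
  have key : ∀ b ∈ F, f b ^ (1 - p) * g b ^ p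
      ≤ S ^ (1 - p) * T ^ p * ((1 - p) * (f b / S) + p * (g b / T)) := by
    intro b hb
    have hgm := Real.geom_mean_le_arith_mean2_weighted (w₁ := 1 - p) (w₂ := p)
      (p₁ := f b / S) (p₂ := g b / T) (by linarith) hp0
      (div_nonneg (hf b hb).le hS.le) (div_nonneg (hg b hb).le hT.le) (by ring)
    have heq : f b ^ (1 - p) * g b ^ p
        = S ^ (1 - p) * T ^ p * ((f b / S) ^ (1 - p) * (g b / T) ^ p) := by
      rw [Real.div_rpow (hf b hb).le hS.le, Real.div_rpow (hg b hb).le hT.le]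
      field_simp
      try ring
    rw [heq]
    exact mul_le_mul_of_nonneg_left hgm hSp.le
  calc ∑ b ∈ F, f b ^ (1 - p) * g b ^ p
      ≤ ∑ b ∈ F, S ^ (1 - p) * T ^ p * ((1 - p) * (f b / S) + p * (g b / T)) :=
        Finset.sum_le_sum key
    _ = S ^ (1 - p) * T ^ p *
        ((1 - p) * ((∑ b ∈ F, f b) / S) + p * ((∑ b ∈ F, g b) / T)) := by
        rw [← Finset.mul_sum]
        congr 1
        rw [Finset.sum_add_distrib, ← Finset.mul_sum, ← Finset.mul_sum,
          ← Finset.sum_div, ← Finset.sum_div]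
    _ ≤ S ^ (1 - p) * T ^ p * ((1 - p) * 1 + p * 1) := by
        apply mul_le_mul_of_nonneg_left _ hSp.le
        have h1 : (∑ b ∈ F, f b) / S ≤ 1 := by rw [div_le_one hS]; exact hfS
        have h2 : (∑ b ∈ F, g b) / T ≤ 1 := by rw [div_le_one hT]; exact hgT
        have h3 : 0 ≤ (∑ b ∈ F, f b) / S :=
          div_nonneg (Finset.sum_nonneg fun b hb => (hf b hb).le) hS.le
        have h4 : 0 ≤ (∑ b ∈ F, g b) / T :=
          div_nonneg (Finset.sum_nonneg fun b hb => (hg b hb).le) hT.le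
        nlinarith
    _ = S ^ (1 - p) * T ^ p := by ring

open Classical in
lemma logMean_superadd {β : Type*} (F : Finset β) (f g : β → ℝ)
    (hf : ∀ b ∈ F, 0 ≤ f b) (hg : ∀ b ∈ F, 0 ≤ g b) {S T : ℝ}
    (hfS : ∑ b ∈ F, f b ≤ S) (hgT : ∑ b ∈ F, g b ≤ T) :
    ∑ b ∈ F, logMean (f b) (g b) ≤ logMean S T := by
  classical
  set F' := F.filter (fun b => 0 < f b ∧ 0 < g b) with hF'
  have hsub : F' ⊆ F := Finset.filter_subset _ _
  have hLHS : ∑ b ∈ F, logMean (f b) (g b) = ∑ b ∈ F', logMean (f b) (g b) := by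
    symm
    apply Finset.sum_subset hsub
    intro b hb hnb
    apply logMean_eq_zero
    intro hpos
    exact hnb (Finset.mem_filter.mpr ⟨hb, hpos⟩)
  rw [hLHS]
  rcases Finset.eq_empty_or_nonempty F' with he | ⟨b0, hb0⟩
  · rw [he, Finset.sum_empty]; exact logMean_nonneg S T
  · have hb0' := Finset.mem_filter.mp hb0
    have hfF' : ∑ b ∈ F', f b ≤ S :=
      le_trans (Finset.sum_le_sum_of_subset_of_nonneg hsub fun b hb _ => hf b hb) hfS
    have hgF' : ∑ b ∈ F', g b ≤ T :=
      le_trans (Finset.sum_le_sum_of_subset_of_nonneg hsub fun b hb _ => hg b hb) hgT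
    have hS : 0 < S := lt_of_lt_of_le
      (lt_of_lt_of_le hb0'.2.1 (Finset.single_le_sum
        (fun b hb => ((Finset.mem_filter.mp hb).2.1).le) hb0)) hfF'
    have hT : 0 < T := lt_of_lt_of_le
      (lt_of_lt_of_le hb0'.2.2 (Finset.single_le_sum
        (fun b hb => ((Finset.mem_filter.mp hb).2.2).le) hb0)) hgF'
    have hRHS : logMean S T = ∫ p in (0:ℝ)..1, S ^ (1 - p) * T ^ p := if_pos ⟨hS, hT⟩
    have hterm : ∀ b ∈ F', logMean (f b) (g b)
        = ∫ p in (0:ℝ)..1, f b ^ (1 - p) * g b ^ p := fun b hb =>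
      if_pos (Finset.mem_filter.mp hb).2
    rw [hRHS, Finset.sum_congr rfl hterm, ← intervalIntegral.integral_finset_sum
      (fun b hb => (integrand_cont (Finset.mem_filter.mp hb).2.1
        (Finset.mem_filter.mp hb).2.2).intervalIntegrable 0 1)]
    apply intervalIntegral.integral_mono_on (by norm_num)
    · exact (continuous_finset_sum F' fun b hb => integrand_cont
        (Finset.mem_filter.mp hb).2.1 (Finset.mem_filter.mp hb).2.2).intervalIntegrable 0 1
    · exact (integrand_cont hS hT).intervalIntegrable 0 1
    · intro p hp
      exact amgm_sum F' f g (fun b hb => (Finset.mem_filter.mp hb).2.1)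
        (fun b hb => (Finset.mem_filter.mp hb).2.2) hfF' hgF' hS hT hp.1 hp.2

lemma convexity_real {β : Type*} [Fintype β] (w x f g : β → ℝ)
    (hw : ∀ b, 0 ≤ w b) (hf : ∀ b, 0 ≤ f b) (hg : ∀ b, 0 ≤ g b)
    (hz : ∀ b, logMean (f b) (g b) = 0 → w b * x b = 0) :
    (∑ b, w b * x b) ^ 2 ≤ logMean (∑ b, w b * f b) (∑ b, w b * g b) *
      ∑ b, w b * (x b ^ 2 / logMean (f b) (g b)) := by
  classical
  set θ : β → ℝ := fun b => logMean (f b) (g b) with hθ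
  set F : Finset β := Finset.univ.filter (fun b => 0 < w b ∧ 0 < θ b) with hF
  have hθ0 : ∀ b, 0 ≤ θ b := fun b => logMean_nonneg _ _
  have h1 : ∑ b, w b * x b = ∑ b ∈ F, w b * x b := by
    symm
    apply Finset.sum_filter_of_ne
    intro b _ hne
    refine ⟨lt_of_le_of_ne (hw b) ?_, lt_of_le_of_ne (hθ0 b) ?_⟩
    · intro h0; exact hne (by rw [← h0, zero_mul])
    · intro h0; exact hne (hz b h0.symm)
  -- Cauchy-Schwarz on F
  set u : β → ℝ := fun b => x b * Real.sqrt (w b / θ b) with hu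
  set v : β → ℝ := fun b => Real.sqrt (w b * θ b) with hv
  have huv : ∀ b ∈ F, u b * v b = w b * x b := by
    intro b hb
    have hwb : 0 < w b := ((Finset.mem_filter.mp hb).2).1
    have hθb : 0 < θ b := ((Finset.mem_filter.mp hb).2).2
    rw [hu, hv]
    simp only []
    rw [mul_assoc, ← Real.sqrt_mul (div_nonneg hwb.le hθb.le)]
    have : w b / θ b * (w b * θ b) = (w b) ^ 2 := by field_simp
    rw [this, Real.sqrt_sq hwb.le]
    ring
  have hcs := Finset.sum_mul_sq_le_sq_mul_sq F u v
  have hu2 : ∀ b ∈ F, u b ^ 2 = w b * (x b ^ 2 / θ b) := by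
    intro b hb
    have hwb : 0 < w b := ((Finset.mem_filter.mp hb).2).1
    have hθb : 0 < θ b := ((Finset.mem_filter.mp hb).2).2
    rw [hu]
    simp only []
    rw [mul_pow, Real.sq_sqrt (div_nonneg hwb.le hθb.le)]
    field_simp
    try ring
  have hv2 : ∀ b ∈ F, v b ^ 2 = w b * θ b := by
    intro b hb
    have hwb : 0 < w b := ((Finset.mem_filter.mp hb).2).1
    have hθb : 0 < θ b := ((Finset.mem_filter.mp hb).2).2
    rw [hv]
    exact Real.sq_sqrt (mul_nonneg hwb.le hθb.le)
  have hA : ∑ b ∈ F, u b ^ 2 ≤ ∑ b, w b * (x b ^ 2 / θ b) := by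
    rw [Finset.sum_congr rfl hu2]
    apply Finset.sum_le_sum_of_subset_of_nonneg (Finset.subset_univ F)
    intro b _ _
    exact mul_nonneg (hw b) (div_nonneg (sq_nonneg _) (hθ0 b))
  have hB : ∑ b ∈ F, v b ^ 2 ≤ logMean (∑ b, w b * f b) (∑ b, w b * g b) := by
    rw [Finset.sum_congr rfl hv2]
    have : ∀ b ∈ F, w b * θ b = logMean (w b * f b) (w b * g b) := by
      intro b _
      rw [hθ, logMean_smul (hw b)]
    rw [Finset.sum_congr rfl this]
    apply logMean_superadd F _ _
      (fun b _ => mul_nonneg (hw b) (hf b)) (fun b _ => mul_nonneg (hw b) (hg b))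
    · exact Finset.sum_le_sum_of_subset_of_nonneg (Finset.subset_univ F)
        (fun b _ _ => mul_nonneg (hw b) (hf b))
    · exact Finset.sum_le_sum_of_subset_of_nonneg (Finset.subset_univ F)
        (fun b _ _ => mul_nonneg (hw b) (hg b))
  have hA0 : 0 ≤ ∑ b ∈ F, u b ^ 2 := Finset.sum_nonneg fun b _ => sq_nonneg _
  calc (∑ b, w b * x b) ^ 2 = (∑ b ∈ F, u b * v b) ^ 2 := by
        rw [h1, Finset.sum_congr rfl huv]
    _ ≤ (∑ b ∈ F, u b ^ 2) * (∑ b ∈ F, v b ^ 2) := hcs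
    _ ≤ (∑ b, w b * (x b ^ 2 / θ b)) *
          logMean (∑ b, w b * f b) (∑ b, w b * g b) := by
        apply mul_le_mul hA hB (Finset.sum_nonneg fun b _ => sq_nonneg _)
        exact Finset.sum_nonneg fun b _ =>
          mul_nonneg (hw b) (div_nonneg (sq_nonneg _) (hθ0 b))
    _ = logMean (∑ b, w b * f b) (∑ b, w b * g b) *
          ∑ b, w b * (x b ^ 2 / θ b) := mul_comm _ _

lemma convexity_ennreal {β : Type*} [Fintype β] (w x f g : β → ℝ)
    (hw : ∀ b, 0 ≤ w b) (hf : ∀ b, 0 ≤ f b) (hg : ∀ b, 0 ≤ g b) :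
    ENNReal.ofReal ((∑ b, w b * x b) ^ 2) /
        ENNReal.ofReal (logMean (∑ b, w b * f b) (∑ b, w b * g b)) ≤
      ∑ b, ENNReal.ofReal (w b) *
        (ENNReal.ofReal (x b ^ 2) / ENNReal.ofReal (logMean (f b) (g b))) := by
  classical
  by_cases hbad : ∃ b, logMean (f b) (g b) = 0 ∧ w b * x b ≠ 0
  · obtain ⟨b, hθb, hwx⟩ := hbad
    have hwb : w b ≠ 0 := fun h => hwx (by rw [h, zero_mul])
    have hxb : x b ≠ 0 := fun h => hwx (by rw [h, mul_zero])
    have hwpos : 0 < w b := (hw b).lt_of_ne' hwb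
    have hterm : ENNReal.ofReal (w b) *
        (ENNReal.ofReal (x b ^ 2) / ENNReal.ofReal (logMean (f b) (g b))) = ⊤ := by
      rw [hθb, ENNReal.ofReal_zero,
        ENNReal.div_zero ((ENNReal.ofReal_pos.mpr (by positivity)).ne'),
        ENNReal.mul_top ((ENNReal.ofReal_pos.mpr hwpos).ne')]
    have htop : ∑ b, ENNReal.ofReal (w b) *
        (ENNReal.ofReal (x b ^ 2) / ENNReal.ofReal (logMean (f b) (g b))) = ⊤ := by
      rw [eq_top_iff, ← hterm]
      exact Finset.single_le_sum (f := fun b => ENNReal.ofReal (w b) *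
        (ENNReal.ofReal (x b ^ 2) / ENNReal.ofReal (logMean (f b) (g b))))
        (fun i _ => zero_le') (Finset.mem_univ b)
    rw [htop]
    exact le_top
  · push_neg at hbad
    have hz : ∀ b, logMean (f b) (g b) = 0 → w b * x b = 0 := hbad
    have key := convexity_real w x f g hw hf hg hz
    set θS := logMean (∑ b, w b * f b) (∑ b, w b * g b) with hθS
    by_cases hpos : 0 < θS
    · rw [← ENNReal.ofReal_div_of_pos hpos]
      calc ENNReal.ofReal ((∑ b, w b * x b) ^ 2 / θS)
          ≤ ENNReal.ofReal (∑ b, w b * (x b ^ 2 / logMean (f b) (g b))) := by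
            apply ENNReal.ofReal_le_ofReal
            rw [div_le_iff₀ hpos]
            linarith [key]
        _ = ∑ b, ENNReal.ofReal (w b * (x b ^ 2 / logMean (f b) (g b))) :=
            ENNReal.ofReal_sum_of_nonneg (fun b _ => mul_nonneg (hw b)
              (div_nonneg (sq_nonneg _) (logMean_nonneg _ _)))
        _ ≤ _ := by
            apply Finset.sum_le_sum
            intro b _
            rcases eq_or_lt_of_le (logMean_nonneg (f b) (g b)) with h0 | h0
            · rw [← h0, div_zero, mul_zero, ENNReal.ofReal_zero]
              exact zero_le'
            · rw [ENNReal.ofReal_mul (hw b), ENNReal.ofReal_div_of_pos h0]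
    · have h0 : θS = 0 := le_antisymm (not_lt.mp hpos) (logMean_nonneg _ _)
      have hsum0 : ∑ b, w b * x b = 0 := by
        have := key
        rw [h0, zero_mul] at this
        exact pow_eq_zero_iff (n := 2) (by norm_num) |>.mp (le_antisymm this (sq_nonneg _))
      rw [hsum0]
      simp

section MatrixHeat
variable {n : Type*} [Fintype n] [DecidableEq n]

lemma exp_entry_summable (M : Matrix n n ℝ) :
    Summable (fun k : ℕ => ((k ! : ℝ)⁻¹) • M ^ k) ∧
    NormedSpace.exp M = ∑' k : ℕ, ((k ! : ℝ)⁻¹) • M ^ k := by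
  letI : SeminormedRing (Matrix n n ℝ) := Matrix.linftyOpSemiNormedRing
  letI : NormedRing (Matrix n n ℝ) := Matrix.linftyOpNormedRing
  letI : NormedAlgebra ℝ (Matrix n n ℝ) := Matrix.linftyOpNormedAlgebra
  exact ⟨NormedSpace.expSeries_summable' M, by rw [NormedSpace.exp_eq_tsum ℝ]⟩

lemma exp_entry (M : Matrix n n ℝ) (a b : n) :
    NormedSpace.exp M a b = ∑' k : ℕ, ((k ! : ℝ)⁻¹) * (M ^ k) a b := by
  obtain ⟨hsum, hexp⟩ := exp_entry_summable M
  rw [hexp]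
  erw [tsum_apply hsum, tsum_apply ((Pi.summable).mp hsum a)]
  simp [smul_eq_mul]

lemma entry_summable (M : Matrix n n ℝ) (a b : n) :
    Summable (fun k : ℕ => ((k ! : ℝ)⁻¹) * (M ^ k) a b) := by
  obtain ⟨hsum, -⟩ := exp_entry_summable M
  simpa [smul_eq_mul] using (Pi.summable.mp ((Pi.summable).mp hsum a)) b

lemma pow_entry_nonneg {M : Matrix n n ℝ} (h : ∀ a b, 0 ≤ M a b) (k : ℕ) :
    ∀ a b, 0 ≤ (M ^ k) a b := by
  induction k with
  | zero =>
    intro a b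
    rw [pow_zero]
    by_cases hab : a = b <;> simp [Matrix.one_apply, hab]
  | succ k ih =>
    intro a b
    rw [pow_succ, Matrix.mul_apply]
    exact Finset.sum_nonneg fun c _ => mul_nonneg (ih a c) (h c b)

lemma exp_entry_nonneg {M : Matrix n n ℝ} (h : ∀ a b, 0 ≤ M a b) (a b : n) :
    0 ≤ NormedSpace.exp M a b := by
  rw [exp_entry]
  exact tsum_nonneg fun k => mul_nonneg (by positivity) (pow_entry_nonneg h k a b)

lemma exp_smul_one (c : ℝ) (a b : n) :
    NormedSpace.exp (c • (1 : Matrix n n ℝ)) a b = Real.exp c * (if a = b then 1 else 0) := by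
  have hexp : Real.exp c = ∑' k : ℕ, ((k ! : ℝ)⁻¹) * c ^ k := by
    rw [Real.exp_eq_exp_ℝ, NormedSpace.exp_eq_tsum ℝ]
    simp [smul_eq_mul]
  rw [exp_entry]
  by_cases hab : a = b
  · simp only [smul_pow, one_pow, Matrix.smul_apply, Matrix.one_apply, if_pos hab,
      smul_eq_mul, mul_one, hexp]
  · simp only [smul_pow, one_pow, Matrix.smul_apply, Matrix.one_apply, if_neg hab,
      smul_eq_mul, mul_zero, tsum_zero]

lemma exp_entry_nonneg_shifted (M : Matrix n n ℝ) (c : ℝ)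
    (h : ∀ a b, 0 ≤ M a b + (if a = b then c else 0)) (a b : n) :
    0 ≤ NormedSpace.exp M a b := by
  have hM : M = (-c) • (1 : Matrix n n ℝ) + (M + c • 1) := by
    ext a' b'
    simp [Matrix.add_apply, Matrix.smul_apply, Matrix.one_apply]
  have hcomm : Commute ((-c) • (1 : Matrix n n ℝ)) (M + c • 1) :=
    (Commute.one_left _).smul_left _
  have hsplit : NormedSpace.exp M = NormedSpace.exp ((-c) • (1 : Matrix n n ℝ)) * NormedSpace.exp (M + c • 1) := by
    conv_lhs => rw [hM]
    exact Matrix.exp_add_of_commute _ _ hcomm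
  have hnn : ∀ a' b', 0 ≤ (M + c • (1 : Matrix n n ℝ)) a' b' := by
    intro a' b'
    have := h a' b'
    simp only [Matrix.add_apply, Matrix.smul_apply, Matrix.one_apply, smul_eq_mul]
    by_cases hab : a' = b'
    · rw [if_pos hab] at this ⊢; linarith
    · rw [if_neg hab] at this ⊢; linarith
  rw [hsplit, Matrix.mul_apply]
  apply Finset.sum_nonneg
  intro x _
  rw [exp_smul_one]
  by_cases hax : a = x
  · simp only [if_pos hax, mul_one]
    exact mul_nonneg (Real.exp_nonneg _) (exp_entry_nonneg hnn x b)
  · simp [if_neg hax]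

lemma colsum_pow {M : Matrix n n ℝ} (h : ∀ b, ∑ a, M a b = 0) :
    ∀ (k : ℕ) (b : n), ∑ a, (M ^ (k + 1)) a b = 0 := by
  intro k
  induction k with
  | zero => intro b; simpa using h b
  | succ k ih =>
    intro b
    have : ∀ a, (M ^ (k + 2)) a b = ∑ x, (M ^ (k + 1)) a x * M x b := by
      intro a
      rw [show k + 2 = (k + 1) + 1 by ring, pow_succ, Matrix.mul_apply]
    simp only [this]
    rw [Finset.sum_comm]
    apply Finset.sum_eq_zero
    intro x _
    rw [← Finset.sum_mul, ih x, zero_mul]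

lemma exp_colsum {M : Matrix n n ℝ} (h : ∀ b, ∑ a, M a b = 0) (b : n) :
    ∑ a, NormedSpace.exp M a b = 1 := by
  simp only [exp_entry]
  rw [← Summable.tsum_finsetSum (fun a _ => entry_summable M a b)]
  have heq : ∀ k : ℕ, ∑ a, ((k ! : ℝ)⁻¹) * (M ^ k) a b
      = if k = 0 then 1 else 0 := by
    intro k
    rw [← Finset.mul_sum]
    cases k with
    | zero => simp [Matrix.one_apply]
    | succ k => simp [colsum_pow h k b]
  calc (∑' k : ℕ, ∑ a, ((k ! : ℝ)⁻¹) * (M ^ k) a b)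
      = ∑' k : ℕ, if k = 0 then (1:ℝ) else 0 := by rw [tsum_congr heq]
    _ = 1 := by rw [tsum_eq_single 0 (fun k hk => if_neg hk)]; simp

lemma pow_shift {G : Type*} [AddCommGroup G] [Fintype G] [DecidableEq G]
    {M : Matrix G G ℝ} (h : ∀ a b c, M (a + c) (b + c) = M a b) (k : ℕ) :
    ∀ a b c, (M ^ k) (a + c) (b + c) = (M ^ k) a b := by
  induction k with
  | zero =>
    intro a b c
    simp [Matrix.one_apply, add_left_inj]
  | succ k ih =>
    intro a b c
    rw [pow_succ, Matrix.mul_apply, Matrix.mul_apply]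
    rw [← Equiv.sum_comp (Equiv.addRight c) (fun x => (M ^ k) (a + c) x * M x (b + c))]
    apply Finset.sum_congr rfl
    intro y _
    simp only [Equiv.coe_addRight]
    rw [ih a y c, h y b c]

lemma exp_shift {G : Type*} [AddCommGroup G] [Fintype G] [DecidableEq G]
    {M : Matrix G G ℝ} (h : ∀ a b c, M (a + c) (b + c) = M a b) (a b c : G) :
    NormedSpace.exp M (a + c) (b + c) = NormedSpace.exp M a b := by
  rw [exp_entry, exp_entry]
  exact tsum_congr fun k => by rw [pow_shift h k a b c]

end MatrixHeat


lemma lapMat_shift (d N : ℕ) [NeZero N] (a b c : TN d N) :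
    lapMat d N (a + c) (b + c) = lapMat d N a b := by
  unfold lapMat
  congr 1
  apply Finset.sum_congr rfl
  intro i _
  have h1 : (b + c = a + c + unitVec d N i) = (b = a + unitVec d N i) := by
    rw [add_right_comm a c (unitVec d N i)]
    exact propext (add_left_inj c)
  have h2 : (b + c = a + c - unitVec d N i) = (b = a - unitVec d N i) := by
    rw [add_sub_right_comm a c (unitVec d N i)]
    exact propext (add_left_inj c)
  have h3 : (b + c = a + c) = (b = a) := propext (add_left_inj c)
  simp only [h1, h2, h3]

lemma sum_ite_one (d N : ℕ) [NeZero N] (c : TN d N) :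
    ∑ a : TN d N, (if c = a then (1:ℝ) else 0) = 1 := by
  rw [Finset.sum_ite_eq Finset.univ c (fun _ => (1:ℝ))]
  simp

lemma lapMat_colsum (d N : ℕ) [NeZero N] (b : TN d N) :
    ∑ a : TN d N, lapMat d N a b = 0 := by
  unfold lapMat
  rw [← Finset.mul_sum, Finset.sum_comm]
  have hkey : ∀ i : Fin d, (∑ a : TN d N, ((if b = a + unitVec d N i then (1:ℝ) else 0)
      + (if b = a - unitVec d N i then 1 else 0) - 2 * (if b = a then 1 else 0))) = 0 := by
    intro i
    rw [Finset.sum_sub_distrib, Finset.sum_add_distrib, ← Finset.mul_sum]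
    have e1 : ∑ a : TN d N, (if b = a + unitVec d N i then (1:ℝ) else 0) = 1 := by
      have h : ∀ a : TN d N, (b = a + unitVec d N i) = (b - unitVec d N i = a) := by
        intro a
        rw [sub_eq_iff_eq_add]
      simp only [h]
      exact sum_ite_one d N _
    have e2 : ∑ a : TN d N, (if b = a - unitVec d N i then (1:ℝ) else 0) = 1 := by
      have h : ∀ a : TN d N, (b = a - unitVec d N i) = (b + unitVec d N i = a) := by
        intro a
        rw [eq_sub_iff_add_eq]
      simp only [h]
      exact sum_ite_one d N _
    rw [e1, e2, sum_ite_one d N b]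
    ring
  rw [Finset.sum_congr rfl (fun i _ => hkey i), Finset.sum_const, smul_zero, mul_zero]

lemma lapMat_diag_bound (d N : ℕ) [NeZero N] (a b : TN d N) :
    0 ≤ lapMat d N a b + (if a = b then 2*(d:ℝ)*(N:ℝ)^2 else 0) := by
  unfold lapMat
  by_cases hab : a = b
  · subst hab
    simp only [eq_self_iff_true, if_true]
    have hX : ∀ i : Fin d, (-2:ℝ) ≤ ((if a = a + unitVec d N i then (1:ℝ) else 0)
        + (if a = a - unitVec d N i then 1 else 0) - 2 * 1) := by
      intro i
      split <;> split <;> norm_num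
    have hsum : (d : ℝ) * (-2 : ℝ) ≤ ∑ i : Fin d,
        ((if a = a + unitVec d N i then (1:ℝ) else 0)
          + (if a = a - unitVec d N i then 1 else 0) - 2 * 1) := by
      calc (d:ℝ) * (-2:ℝ) = ∑ _i : Fin d, (-2:ℝ) := by
            rw [Finset.sum_const, Finset.card_univ, Fintype.card_fin, nsmul_eq_mul]
        _ ≤ _ := Finset.sum_le_sum fun i _ => hX i
    have hN2 : (0:ℝ) ≤ (N:ℝ)^2 := sq_nonneg _
    nlinarith
  · rw [if_neg hab, add_zero]
    apply mul_nonneg (sq_nonneg _)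
    apply Finset.sum_nonneg
    intro i _
    have hba : ¬ (b = a) := fun h => hab h.symm
    rw [if_neg hba, mul_zero, sub_zero]
    split <;> split <;> norm_num

lemma smulLap_shifted_nonneg (d N : ℕ) [NeZero N] {s : ℝ} (hs : 0 ≤ s) (a b : TN d N) :
    0 ≤ (s • lapMat d N) a b + (if a = b then 2*(d:ℝ)*(N:ℝ)^2*s else 0) := by
  have h := lapMat_diag_bound d N a b
  have heq : (s • lapMat d N) a b + (if a = b then 2*(d:ℝ)*(N:ℝ)^2*s else 0)
      = s * (lapMat d N a b + (if a = b then 2*(d:ℝ)*(N:ℝ)^2 else 0)) := by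
    rw [Matrix.smul_apply, smul_eq_mul]
    split <;> ring
  rw [heq]
  exact mul_nonneg hs h

lemma smulLap_colsum (d N : ℕ) [NeZero N] (s : ℝ) (b : TN d N) :
    ∑ a : TN d N, (s • lapMat d N) a b = 0 := by
  simp only [Matrix.smul_apply, smul_eq_mul, ← Finset.mul_sum, lapMat_colsum, mul_zero]

lemma smulLap_shift (d N : ℕ) [NeZero N] (s : ℝ) (a b c : TN d N) :
    (s • lapMat d N) (a + c) (b + c) = (s • lapMat d N) a b := by
  simp only [Matrix.smul_apply, lapMat_shift]

lemma heatKerN_eq (d N : ℕ) [NeZero N] (s : ℝ) (c : TN d N) :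
    heatKerN d N s c = NormedSpace.exp (s • lapMat d N) c 0 * (N:ℝ)^d := by
  unfold heatKerN heatN
  rw [Finset.sum_congr rfl (fun b _ => by rw [mul_ite, mul_zero])]
  rw [Finset.sum_ite_eq' Finset.univ (0 : TN d N)
    (fun b => NormedSpace.exp (s • lapMat d N) c b * (N:ℝ)^d)]
  simp

lemma heatVecN_eq (d N : ℕ) [NeZero N] (s : ℝ) (V : TN d N → Fin d → ℝ)
    (a : TN d N) (i : Fin d) :
    heatVecN d N s V a i
      = ∑ b : TN d N, NormedSpace.exp (s • lapMat d N) a b * V b i := by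
  unfold heatVecN
  have hNd : ((N:ℝ))^d ≠ 0 := pow_ne_zero _ (Nat.cast_ne_zero.mpr (NeZero.ne N))
  rw [Finset.mul_sum]
  apply Finset.sum_congr rfl
  intro b _
  rw [heatKerN_eq]
  have hshift : NormedSpace.exp (s • lapMat d N) (a - b) 0
      = NormedSpace.exp (s • lapMat d N) a b := by
    have h := (exp_shift (fun x y z => smulLap_shift d N s x y z) (a - b) 0 b).symm
    rw [sub_add_cancel, zero_add] at h
    exact h
  rw [hshift]
  field_simp

lemma heatN_shift (d N : ℕ) [NeZero N] (s : ℝ) (ρ : TN d N → ℝ) (a c : TN d N) :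
    heatN d N s ρ (a + c)
      = ∑ b : TN d N, NormedSpace.exp (s • lapMat d N) a b * ρ (b + c) := by
  unfold heatN
  rw [← Equiv.sum_comp (Equiv.addRight c)
    (fun b => NormedSpace.exp (s • lapMat d N) (a + c) b * ρ b)]
  apply Finset.sum_congr rfl
  intro b _
  simp only [Equiv.coe_addRight]
  rw [exp_shift (fun x y z => smulLap_shift d N s x y z) a b c]

end AuxLemmas

/-- The action does not increase under the discrete heat flow:
`A_N(H^N_s ρ, H^N_s V) ≤ A_N(ρ, V)`. -/
theorem stmt10 (d N : ℕ) [NeZero N] (s : ℝ) (hs : 0 < s) (hN : 1 ≤ N)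
    (ρ : TN d N → ℝ) (hρ : IsDensity d N ρ) (V : TN d N → Fin d → ℝ) :
    actionN d N (heatN d N s ρ) (heatVecN d N s V) ≤ actionN d N ρ V := by
  classical
  have hKnn : ∀ a b : TN d N, 0 ≤ NormedSpace.exp (s • lapMat d N) a b :=
    fun a b => exp_entry_nonneg_shifted _ (2*(d:ℝ)*(N:ℝ)^2*s)
      (fun a' b' => smulLap_shifted_nonneg d N hs.le a' b') a b
  have hKcol : ∀ b : TN d N, ∑ a : TN d N, NormedSpace.exp (s • lapMat d N) a b = 1 :=
    fun b => exp_colsum (fun b' => smulLap_colsum d N s b') b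
  unfold actionN
  apply mul_le_mul_right
  have key : ∀ (a : TN d N) (i : Fin d),
      ENNReal.ofReal (heatVecN d N s V a i ^ 2) /
        ENNReal.ofReal (logMean (heatN d N s ρ a) (heatN d N s ρ (a + unitVec d N i)))
      ≤ ∑ b : TN d N, ENNReal.ofReal (NormedSpace.exp (s • lapMat d N) a b) *
          (ENNReal.ofReal (V b i ^ 2) /
            ENNReal.ofReal (logMean (ρ b) (ρ (b + unitVec d N i)))) := by
    intro a i
    have h1 : heatN d N s ρ a
        = ∑ b : TN d N, NormedSpace.exp (s • lapMat d N) a b * ρ b := rfl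
    have h2 := heatN_shift d N s ρ a (unitVec d N i)
    have h3 := heatVecN_eq d N s V a i
    rw [h1, h2, h3]
    exact convexity_ennreal _ _ _ _ (hKnn a) hρ.1 (fun b => hρ.1 _)
  calc ∑ a : TN d N, ∑ i : Fin d,
        ENNReal.ofReal (heatVecN d N s V a i ^ 2) /
          ENNReal.ofReal (logMean (heatN d N s ρ a) (heatN d N s ρ (a + unitVec d N i)))
      ≤ ∑ a : TN d N, ∑ i : Fin d, ∑ b : TN d N,
          ENNReal.ofReal (NormedSpace.exp (s • lapMat d N) a b) *
            (ENNReal.ofReal (V b i ^ 2) /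
              ENNReal.ofReal (logMean (ρ b) (ρ (b + unitVec d N i)))) :=
        Finset.sum_le_sum fun a _ => Finset.sum_le_sum fun i _ => key a i
    _ = ∑ a : TN d N, ∑ i : Fin d,
          ENNReal.ofReal (V a i ^ 2) /
            ENNReal.ofReal (logMean (ρ a) (ρ (a + unitVec d N i))) := by
        rw [Finset.sum_comm]
        conv_rhs => rw [Finset.sum_comm]
        apply Finset.sum_congr rfl
        intro i _
        rw [Finset.sum_comm]
        apply Finset.sum_congr rfl
        intro b _
        rw [← Finset.sum_mul, ← ENNReal.ofReal_sum_of_nonneg (fun a _ => hKnn a b),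
          hKcol b, ENNReal.ofReal_one, one_mul]


end GHConv
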